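/- Let V be a vertex algebra graded by conformal weight in nonnegative half-integers with V[0] ≅ C. Then Zhu's subspace C(V) = span{a_{(-2)} b : a, b ∈ V} is closed in the sense that the normally ordered product a_{(-1)} b descends to a well-defined commutative associative product on the quotient R_V = V / C(V), with unit the image of the vacuum vector. -/

import Mathlib

/-!
Write `∂a = a_{(-2)}1`. The derivative axiom `(∂a)_{(n)}b = -n a_{(n-1)}b` lets one lower the
index of a product, so over a field of characteristic zero every `a_{(n)}b` with `n ≤ -2` lies in
`C(V)`. Skew-symmetry writes `a_{(-1)}b - b_{(-1)}a` and quasi-associativity writes the associator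
as finite sums of such products. Since `(∂a)_{(-1)}b = a_{(-2)}b`, the associator of `∂a, b, c`
shows that `C(V)` is a left ideal, and commutativity modulo `C(V)` makes it two-sided.
-/

/-- A (non-super) vertex algebra over a commutative ring `R`. -/
structure VertexAlg (R : Type) [CommRing R] (V : Type) [AddCommGroup V] [Module R V] where
  mul : ℤ → V →ₗ[R] V →ₗ[R] V
  one : V
  trunc : ∀ a b : V, ∃ N : ℤ, ∀ n : ℤ, N ≤ n → mul n a b = 0
  vacuum_left : ∀ (n : ℤ) (a : V), mul n one a = if n = -1 then a else 0
  vacuum_create : ∀ a : V, mul (-1) a one = a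
  vacuum_right : ∀ (n : ℤ), 0 ≤ n → ∀ a : V, mul n a one = 0
  deriv_mul : ∀ (n : ℤ) (a b : V), mul n (mul (-2) a one) b = (-n) • mul (n - 1) a b
  skew : ∀ (n : ℤ) (a b : V),
    mul n a b = ∑ᶠ p : ℤ, ((p + 1).negOnePow : ℤ) • mul (n - p - 1) (mul p b a) one
  quasi_assoc : ∀ a b c : V,
    mul (-1) (mul (-1) a b) c - mul (-1) a (mul (-1) b c) =
      ∑ᶠ n : ℕ, (mul (-(n : ℤ) - 2) a (mul (n : ℤ) b c) +
        mul (-(n : ℤ) - 2) b (mul (n : ℤ) a c))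
  non_comm : ∀ (n : ℕ) (a b c : V),
    mul (n : ℤ) a (mul (-1) b c) - mul (-1) (mul (n : ℤ) a b) c -
        mul (-1) b (mul (n : ℤ) a c) =
      ∑ i ∈ Finset.Icc 1 n, (n.choose i) • mul ((i : ℤ) - 1) (mul ((n : ℤ) - (i : ℤ)) a b) c
  jacobi : ∀ (r s : ℕ) (a b c : V),
    mul (r : ℤ) a (mul (s : ℤ) b c) = mul (s : ℤ) b (mul (r : ℤ) a c) +
      ∑ i ∈ Finset.range (r + 1),
        (r.choose i) • mul ((r : ℤ) + (s : ℤ) - (i : ℤ)) (mul (i : ℤ) a b) c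

theorem Submodule.finsum_sub_mem_of_forall_ne {ι R M : Type*} [Semiring R] [AddCommGroup M]
    [Module R M] (p : Submodule R M) {f : ι → M} (hf : (Function.support f).Finite) (i₀ : ι)
    (h : ∀ i, i ≠ i₀ → f i ∈ p) : (∑ᶠ i, f i) - f i₀ ∈ p := by
  classical
  have hsupp : Function.support f ⊆ ↑(insert i₀ hf.toFinset) := by simp
  rw [finsum_eq_sum_of_support_subset f hsupp,
    ← Finset.sum_erase_add _ _ (Finset.mem_insert_self i₀ _), add_sub_cancel_right]
  exact p.sum_mem fun i hi => h i (Finset.ne_of_mem_erase hi)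

namespace VertexAlg

section CommRing

variable {R : Type} [CommRing R] {V : Type} [AddCommGroup V] [Module R V] (Va : VertexAlg R V)

def zhuC : Submodule R V :=
  Submodule.span R {x : V | ∃ a b : V, x = Va.mul (-2) a b}

theorem mul_neg_two_mem_zhuC (a b : V) : Va.mul (-2) a b ∈ Va.zhuC :=
  Submodule.subset_span ⟨a, b, rfl⟩

theorem mul_neg_one_deriv (a b : V) : Va.mul (-1) (Va.mul (-2) a Va.one) b = Va.mul (-2) a b := by
  rw [Va.deriv_mul]
  norm_num

theorem support_skew_summand_finite (n : ℤ) (a b : V) :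
    (Function.support fun p : ℤ =>
      ((p + 1).negOnePow : ℤ) • Va.mul (n - p - 1) (Va.mul p b a) Va.one).Finite := by
  obtain ⟨N, hN⟩ := Va.trunc b a
  refine (Set.finite_Icc (n - 1) N).subset fun p hp => ?_
  simp only [Function.mem_support] at hp
  by_contra hp'
  rcases not_and_or.mp hp' with hlow | hhigh
  · exact hp (by rw [Va.vacuum_right _ (by omega), smul_zero])
  · exact hp (by rw [hN p (by omega), map_zero, LinearMap.zero_apply, smul_zero])

end CommRing

section Field

variable {R : Type} [Field R] [CharZero R] {V : Type} [AddCommGroup V] [Module R V]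
  (Va : VertexAlg R V)

theorem mul_sub_one_eq_smul_mul_deriv {n : ℤ} (hn : n ≠ 0) (a b : V) :
    Va.mul (n - 1) a b = ((-n : ℤ) : R)⁻¹ • Va.mul n (Va.mul (-2) a Va.one) b := by
  have hn' : ((-n : ℤ) : R) ≠ 0 := by exact_mod_cast neg_ne_zero.mpr hn
  rw [Va.deriv_mul, ← Int.cast_smul_eq_zsmul R, inv_smul_smul₀ hn']

theorem mul_mem_zhuC_of_le {n : ℤ} (hn : n ≤ -2) (a b : V) : Va.mul n a b ∈ Va.zhuC := by
  induction n, hn using Int.leInductionDown generalizing a with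
  | base => exact Va.mul_neg_two_mem_zhuC a b
  | pred n hn ih =>
    rw [Va.mul_sub_one_eq_smul_mul_deriv (by omega)]
    exact Va.zhuC.smul_mem _ (ih _)

theorem mul_neg_one_assoc_sub_mem_zhuC (a b c : V) :
    Va.mul (-1) (Va.mul (-1) a b) c - Va.mul (-1) a (Va.mul (-1) b c) ∈ Va.zhuC := by
  rw [Va.quasi_assoc]
  exact finsum_induction (· ∈ Va.zhuC) Va.zhuC.zero_mem (fun _ _ => Va.zhuC.add_mem) fun n =>
    Va.zhuC.add_mem (Va.mul_mem_zhuC_of_le (by omega) _ _) (Va.mul_mem_zhuC_of_le (by omega) _ _)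

theorem mul_neg_one_mem_zhuC_of_left_mem {a : V} (ha : a ∈ Va.zhuC) (b : V) :
    Va.mul (-1) a b ∈ Va.zhuC := by
  induction ha using Submodule.span_induction with
  | mem x hx =>
    obtain ⟨u, v, rfl⟩ := hx
    have h := Va.mul_neg_one_assoc_sub_mem_zhuC (Va.mul (-2) u Va.one) v b
    simp only [mul_neg_one_deriv] at h
    exact (Va.zhuC.sub_mem_iff_left (Va.mul_neg_two_mem_zhuC _ _)).mp h
  | zero => simp
  | add x y _ _ hx hy => simpa only [map_add, LinearMap.add_apply] using Va.zhuC.add_mem hx hy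
  | smul r x _ hx => simpa only [map_smul, LinearMap.smul_apply] using Va.zhuC.smul_mem r hx

theorem mul_neg_one_comm_sub_mem_zhuC (a b : V) :
    Va.mul (-1) a b - Va.mul (-1) b a ∈ Va.zhuC := by
  have h := Va.zhuC.finsum_sub_mem_of_forall_ne (Va.support_skew_summand_finite (-1) a b) (-1)
    fun p hp => ?_
  · simpa [← Va.skew, Va.vacuum_create] using h
  · rcases lt_or_gt_of_ne hp with hlow | hhigh
    · simp [Va.vacuum_right (-1 - p - 1) (by omega)]
    · exact Va.zhuC.smul_of_tower_mem _ (Va.mul_mem_zhuC_of_le (by omega) _ _)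

theorem mul_neg_one_mem_zhuC_of_right_mem (a : V) {b : V} (hb : b ∈ Va.zhuC) :
    Va.mul (-1) a b ∈ Va.zhuC :=
  (Va.zhuC.sub_mem_iff_left (Va.mul_neg_one_mem_zhuC_of_left_mem hb a)).mp
    (Va.mul_neg_one_comm_sub_mem_zhuC a b)

end Field

end VertexAlg

theorem zhu_quotient_is_commutative_associative
    (V : Type) [AddCommGroup V] [Module ℂ V] (Va : VertexAlg ℂ V) :
    -- Zhu's subspace `C(V)`:
    let C : Submodule ℂ V := Submodule.span ℂ {x : V | ∃ a b : V, x = Va.mul (-2) a b}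
    (∀ a b : V, a ∈ C → Va.mul (-1) a b ∈ C) ∧
    (∀ a b : V, b ∈ C → Va.mul (-1) a b ∈ C) ∧
    (∀ a b : V, Va.mul (-1) a b - Va.mul (-1) b a ∈ C) ∧
    (∀ a b c : V,
      Va.mul (-1) (Va.mul (-1) a b) c - Va.mul (-1) a (Va.mul (-1) b c) ∈ C) :=
  ⟨fun _ b ha => Va.mul_neg_one_mem_zhuC_of_left_mem ha b,
    fun a _ hb => Va.mul_neg_one_mem_zhuC_of_right_mem a hb,
    Va.mul_neg_one_comm_sub_mem_zhuC,
    Va.mul_neg_one_assoc_sub_mem_zhuC⟩
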